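/- Let (W_n) be a sequence of P-variables (each W_n defined on its own pair of probability spaces). Then (W_n) is a Cauchy sequence in the P-variables metric d_M if and only if for every integer k ≥ 1 the sequence of sets (S'_k(W_n)) is a Cauchy sequence in the Hausdorff (pseudo)metric d_H. -/

import Mathlib

set_option autoImplicit false

open MeasureTheory Set
open scoped ENNReal NNReal

noncomputable section

/-- `ℝ^n` with the Euclidean metric. -/
abbrev RE (n : ℕ) : Type := EuclideanSpace ℝ (Fin n)

/-- The random vector `(f₁(x₁), f₁(x₂), …, f_k(x₁), f_k(x₂), W(x₁,x₂,x₁₂))`. -/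
def sVec {Ω₁ Ω₂ : Type*} (k : ℕ) (f : Fin k → Ω₁ → ℝ)
    (W : Ω₁ × Ω₁ × Ω₂ → ℝ) (x : Ω₁ × Ω₁ × Ω₂) : RE (2 * k + 1) :=
  (WithLp.equiv 2 (Fin (2 * k + 1) → ℝ)).symm fun i =>
    if _ : (i : ℕ) < 2 * k then
      if (i : ℕ) % 2 = 0 then f ⟨(i : ℕ) / 2, by omega⟩ x.1
      else f ⟨(i : ℕ) / 2, by omega⟩ x.2.1
    else W x

/-- `S(f₁,…,f_k,W)`: the pushforward of the product measure `P₁ ⊗ P₁ ⊗ P₂` under `sVec`. -/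
def Smeasure {Ω₁ Ω₂ : Type*} [MeasurableSpace Ω₁] [MeasurableSpace Ω₂]
    (P₁ : Measure Ω₁) (P₂ : Measure Ω₂) {k : ℕ} (f : Fin k → Ω₁ → ℝ)
    (W : Ω₁ × Ω₁ × Ω₂ → ℝ) : Measure (RE (2 * k + 1)) :=
  (P₁.prod (P₁.prod P₂)).map (sVec k f W)

/-- The `k`-profile `S_k(W)`. -/
def SkSet {Ω₁ Ω₂ : Type*} [MeasurableSpace Ω₁] [MeasurableSpace Ω₂]
    (P₁ : Measure Ω₁) (P₂ : Measure Ω₂) (k : ℕ)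
    (W : Ω₁ × Ω₁ × Ω₂ → ℝ) : Set (Measure (RE (2 * k + 1))) :=
  {μ | ∃ f : Fin k → Ω₁ → ℝ, (∀ i, Measurable (f i)) ∧
    (∀ i x, f i x ∈ Icc (-1 : ℝ) 1) ∧ μ = Smeasure P₁ P₂ f W}

/-- A function partition: `{0,1}`-valued measurable functions summing to `1`. -/
def IsFunctionPartition {Ω₁ : Type*} [MeasurableSpace Ω₁] {k : ℕ}
    (f : Fin k → Ω₁ → ℝ) : Prop :=
  (∀ i, Measurable (f i)) ∧ (∀ i x, f i x = 0 ∨ f i x = 1) ∧ ∀ x, ∑ i, f i x = 1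

/-- The restricted `k`-profile `S'_k(W)`. -/
def SkSet' {Ω₁ Ω₂ : Type*} [MeasurableSpace Ω₁] [MeasurableSpace Ω₂]
    (P₁ : Measure Ω₁) (P₂ : Measure Ω₂) (k : ℕ)
    (W : Ω₁ × Ω₁ × Ω₂ → ℝ) : Set (Measure (RE (2 * k + 1))) :=
  {μ | ∃ f : Fin k → Ω₁ → ℝ, IsFunctionPartition f ∧ μ = Smeasure P₁ P₂ f W}

/-- Hausdorff edistance (w.r.t. the Lévy–Prokhorov distance) between sets of measures. -/
def eHausLP {X : Type*} [MeasurableSpace X] [PseudoEMetricSpace X]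
    (A B : Set (Measure X)) : ℝ≥0∞ :=
  max (⨆ μ ∈ A, ⨅ ν ∈ B, levyProkhorovEDist μ ν)
      (⨆ ν ∈ B, ⨅ μ ∈ A, levyProkhorovEDist μ ν)

/-- Hausdorff distance (w.r.t. the Lévy–Prokhorov distance) between sets of measures. -/
def dHLP {X : Type*} [MeasurableSpace X] [PseudoEMetricSpace X]
    (A B : Set (Measure X)) : ℝ := (eHausLP A B).toReal

/-- A `P`-variable: a measurable real-valued function on a product `Ω₁ × Ω₁ × Ω₂`
of probability spaces. -/
structure PVar where
  (Ω₁ : Type*)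
  (Ω₂ : Type*)
  [m₁ : MeasurableSpace Ω₁]
  [m₂ : MeasurableSpace Ω₂]
  (P₁ : Measure Ω₁)
  (P₂ : Measure Ω₂)
  (prob₁ : IsProbabilityMeasure P₁)
  (prob₂ : IsProbabilityMeasure P₂)
  (W : Ω₁ × Ω₁ × Ω₂ → ℝ)
  (meas : Measurable W)

attribute [instance] PVar.m₁ PVar.m₂

/-- The underlying product probability measure of a `P`-variable. -/
def PVar.vol (V : PVar) : Measure (V.Ω₁ × V.Ω₁ × V.Ω₂) := V.P₁.prod (V.P₁.prod V.P₂)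

/-- The `k`-profile of a `P`-variable. -/
def PVar.Sk (V : PVar) (k : ℕ) : Set (Measure (RE (2 * k + 1))) := SkSet V.P₁ V.P₂ k V.W

/-- The restricted `k`-profile of a `P`-variable. -/
def PVar.Sk' (V : PVar) (k : ℕ) : Set (Measure (RE (2 * k + 1))) := SkSet' V.P₁ V.P₂ k V.W

/-- The `P`-variables metric `d_M`. -/
def dM (V U : PVar) : ℝ :=
  ∑' k : ℕ, (2 : ℝ)⁻¹ ^ (k + 1) * dHLP (V.Sk (k + 1)) (U.Sk (k + 1))


/-!
`d_M` is Cauchy iff every `d_H(S_k)` is: each `d_H(S_k) ≤ 1`, so `d_H(S_k) ≤ 2^k d_M` and, by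
dominated convergence, the series defining `d_M` tends to `0` when all its terms do. It remains
to compare `S_k` with `S'_k`.

Since `S'_k ⊆ S_k`, a partition profile `S(f, V)` is close to some profile `S(g, U)`. The even
coordinates of `S(f, V)` are unit vectors almost surely, so `g(y)` is close to a unit vector
outside a set of small mass, and rounding `g` to the nearest unit vector produces a partition of
`U`; hence `d_H(S'_k) ≤ (2k+3) d_H(S_k)`.

Conversely, quantizing `f₁, …, f_k` on a grid of mesh `2/(r+1)` moves `S(f, V)` by `O(k/r)`, and
the quantized profile is the image of the profile of the partition into the `(r+2)^k` grid cells
under a fixed linear map. A `K`-Lipschitz map expands Lévy–Prokhorov distances by at most `K`, so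
`d_H(S_k) ≤ K_r d_H(S'_{(r+2)^k}) + O(k/r)`.
-/

open Metric Filter Topology

attribute [local instance] PVar.prob₁ PVar.prob₂

lemma le_of_forall_gt_of_continuous {F : ℝ → ℝ} (hF : Continuous F) {x D : ℝ}
    (h : ∀ d > D, x ≤ F d) : x ≤ F D :=
  ge_of_tendsto ((hF.tendsto D).mono_left nhdsWithin_le_nhds)
    (eventually_nhdsWithin_of_forall (s := Ioi D) h)

lemma summable_two_inv_pow_succ : Summable fun k : ℕ => (2 : ℝ)⁻¹ ^ (k + 1) :=
  (summable_nat_add_iff 1).2 (summable_geometric_of_lt_one (by norm_num) (by norm_num))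

section HausdorffLevyProkhorov

variable {X : Type*} [MeasurableSpace X] [PseudoEMetricSpace X] {A B : Set (Measure X)}
  {e : ℝ≥0∞}

lemma dHLP_nonneg : 0 ≤ dHLP A B :=
  ENNReal.toReal_nonneg

lemma eHausLP_comm (A B : Set (Measure X)) : eHausLP A B = eHausLP B A := by
  simp only [eHausLP, max_comm, levyProkhorovEDist_comm]

lemma eHausLP_le_of_forall_exists (hA : ∀ μ ∈ A, ∃ ν ∈ B, levyProkhorovEDist μ ν ≤ e)
    (hB : ∀ ν ∈ B, ∃ μ ∈ A, levyProkhorovEDist ν μ ≤ e) : eHausLP A B ≤ e := by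
  refine max_le (iSup₂_le fun μ hμ => ?_) (iSup₂_le fun ν hν => ?_)
  · obtain ⟨ν, hν, h⟩ := hA μ hμ
    exact iInf₂_le_of_le ν hν h
  · obtain ⟨μ, hμ, h⟩ := hB ν hν
    exact iInf₂_le_of_le μ hμ (levyProkhorovEDist_comm μ ν ▸ h)

lemma exists_levyProkhorovEDist_lt_of_eHausLP_lt (h : eHausLP A B < e) {μ : Measure X}
    (hμ : μ ∈ A) : ∃ ν ∈ B, levyProkhorovEDist μ ν < e := by
  have := (le_iSup₂ (f := fun μ _ => ⨅ ν ∈ B, levyProkhorovEDist μ ν) μ hμ).trans_lt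
    ((le_max_left _ _).trans_lt h)
  simpa [iInf_lt_iff] using this

lemma levyProkhorovEDist_le_one (μ ν : Measure X) [IsProbabilityMeasure μ]
    [IsProbabilityMeasure ν] : levyProkhorovEDist μ ν ≤ 1 := by
  simpa using levyProkhorovEDist_le_max_measure_univ μ ν

lemma eHausLP_le_one (hA : ∀ μ ∈ A, IsProbabilityMeasure μ)
    (hB : ∀ ν ∈ B, IsProbabilityMeasure ν) (hA₀ : A.Nonempty) (hB₀ : B.Nonempty) :
    eHausLP A B ≤ 1 := by
  obtain ⟨μ₀, hμ₀⟩ := hA₀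
  obtain ⟨ν₀, hν₀⟩ := hB₀
  have := hA μ₀ hμ₀; have := hB ν₀ hν₀
  refine eHausLP_le_of_forall_exists (fun μ hμ => ?_) (fun ν hν => ?_)
  · have := hA μ hμ
    exact ⟨ν₀, hν₀, levyProkhorovEDist_le_one μ ν₀⟩
  · have := hB ν hν
    exact ⟨μ₀, hμ₀, levyProkhorovEDist_le_one ν μ₀⟩

end HausdorffLevyProkhorov

lemma LipschitzWith.thickening_preimage_subset {X Y : Type*} [PseudoMetricSpace X]
    [PseudoMetricSpace Y] {K : ℝ≥0} {L : X → Y} (hL : LipschitzWith K L) (hK : K ≠ 0) (δ : ℝ)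
    (B : Set Y) : thickening δ (L ⁻¹' B) ⊆ L ⁻¹' thickening (K * δ) B := by
  intro x hx
  obtain ⟨z, hz, hxz⟩ := mem_thickening_iff.1 hx
  refine mem_thickening_iff.2 ⟨L z, hz, ?_⟩
  calc dist (L x) (L z) ≤ K * dist x z := hL.dist_le_mul x z
    _ < K * δ := by gcongr

section PushforwardLevyProkhorov

variable {α X Y : Type*} [MeasurableSpace α]
  [PseudoMetricSpace X] [MeasurableSpace X] [PseudoMetricSpace Y] [MeasurableSpace Y]
  [OpensMeasurableSpace Y]

lemma map_le_map_thickening_add_of_measure_lt_dist (μ : Measure α) {φ ψ : α → Y}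
    (hφ : Measurable φ) (hψ : Measurable ψ) {δ : ℝ} (hδ : 0 ≤ δ)
    (h : μ {x | δ < dist (φ x) (ψ x)} ≤ ENNReal.ofReal δ) {ε : ℝ≥0∞}
    (hδε : ENNReal.ofReal δ < ε) (hε : ε < ⊤) {B : Set Y} (hB : MeasurableSet B) :
    μ.map φ B ≤ μ.map ψ (thickening ε.toReal B) + ε := by
  have hδε' : δ < ε.toReal := by rwa [ENNReal.ofReal_lt_iff_lt_toReal hδ hε.ne] at hδε
  rw [Measure.map_apply hφ hB, Measure.map_apply hψ isOpen_thickening.measurableSet]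
  calc μ (φ ⁻¹' B) ≤ μ (ψ ⁻¹' thickening ε.toReal B ∪ {x | δ < dist (φ x) (ψ x)}) := by
        refine measure_mono fun x hx => ?_
        rcases le_or_gt (dist (φ x) (ψ x)) δ with hclose | hfar
        · exact Or.inl (mem_thickening_iff.2 ⟨φ x, hx, by rw [dist_comm]; linarith⟩)
        · exact Or.inr hfar
    _ ≤ μ (ψ ⁻¹' thickening ε.toReal B) + ε :=
        (measure_union_le _ _).trans (by gcongr; exact h.trans hδε.le)

/-- The Ky Fan distance of two random variables dominates the Lévy–Prokhorov distance of
their laws. -/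
lemma levyProkhorovEDist_map_le_of_measure_lt_dist (μ : Measure α) {φ ψ : α → Y}
    (hφ : Measurable φ) (hψ : Measurable ψ) {δ : ℝ} (hδ : 0 ≤ δ)
    (h : μ {x | δ < dist (φ x) (ψ x)} ≤ ENNReal.ofReal δ) :
    levyProkhorovEDist (μ.map φ) (μ.map ψ) ≤ ENNReal.ofReal δ := by
  have h' : μ {x | δ < dist (ψ x) (φ x)} ≤ ENNReal.ofReal δ := by simpa only [dist_comm] using h
  exact levyProkhorovEDist_le_of_forall _ _ _ fun ε B hδε hε hB =>
    ⟨map_le_map_thickening_add_of_measure_lt_dist μ hφ hψ hδ h hδε hε hB,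
      map_le_map_thickening_add_of_measure_lt_dist μ hψ hφ hδ h' hδε hε hB⟩

lemma levyProkhorovEDist_map_le_of_lipschitzWith {K : ℝ≥0} {L : X → Y}
    (hL : LipschitzWith K L) (hK : 1 ≤ K) (hLm : Measurable L) (μ ν : Measure X) :
    levyProkhorovEDist (μ.map L) (ν.map L) ≤ K * levyProkhorovEDist μ ν := by
  have hK₀ : K ≠ 0 := (zero_lt_one.trans_le hK).ne'
  refine levyProkhorovEDist_le_of_forall _ _ _ fun ε B hε hε_top hB => ?_
  have hlt : levyProkhorovEDist μ ν < ε / K := by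
    rwa [ENNReal.lt_div_iff_mul_lt (.inl (by simpa using hK₀)) (.inl (by simp)), mul_comm]
  have hdiv : ε / K ≤ ε :=
    ENNReal.div_le_of_le_mul (le_mul_of_one_le_right' (by exact_mod_cast hK))
  have hsub : thickening (ε / K).toReal (L ⁻¹' B) ⊆ L ⁻¹' thickening ε.toReal B := by
    convert hL.thickening_preimage_subset hK₀ _ B using 3
    rw [ENNReal.toReal_div, ENNReal.coe_toReal, mul_div_cancel₀ _ (by exact_mod_cast hK₀)]
  rw [Measure.map_apply hLm hB, Measure.map_apply hLm isOpen_thickening.measurableSet,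
    Measure.map_apply hLm hB, Measure.map_apply hLm isOpen_thickening.measurableSet]
  exact ⟨(left_measure_le_of_levyProkhorovEDist_lt hlt (hLm hB)).trans
      (add_le_add (measure_mono hsub) hdiv),
    (right_measure_le_of_levyProkhorovEDist_lt hlt (hLm hB)).trans
      (add_le_add (measure_mono hsub) hdiv)⟩

end PushforwardLevyProkhorov

lemma EuclideanSpace.dist_le_mul_of_forall_dist_apply_le {ι : Type*} [Fintype ι]
    {v w : EuclideanSpace ℝ ι} {c : ℝ} (hc : 0 ≤ c) (h : ∀ i, dist (v i) (w i) ≤ c) :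
    dist v w ≤ Fintype.card ι * c := by
  rw [EuclideanSpace.dist_eq]
  calc √(∑ i, dist (v i) (w i) ^ 2) ≤ √(Fintype.card ι * c ^ 2) := by
        gcongr
        simpa using Finset.sum_le_card_nsmul Finset.univ _ _ fun i _ =>
          pow_le_pow_left₀ dist_nonneg (h i) 2
    _ = √(Fintype.card ι) * c := by rw [Real.sqrt_mul (Nat.cast_nonneg _), Real.sqrt_sq hc]
    _ ≤ Fintype.card ι * c := by
        gcongr
        rcases Nat.eq_zero_or_pos (Fintype.card ι) with h₀ | h₀
        · simp [h₀]
        · exact Real.sqrt_le_self_iff.2 (.inr (by exact_mod_cast h₀))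

section ProfileVector

variable {Ω₁ Ω₂ : Type*} {k : ℕ} {f g : Fin k → Ω₁ → ℝ} {W : Ω₁ × Ω₁ × Ω₂ → ℝ}

lemma sVec_apply_two_mul (x : Ω₁ × Ω₁ × Ω₂) (j : Fin k) :
    sVec k f W x ⟨2 * j, by omega⟩ = f j x.1 := by
  simp [sVec]

lemma dist_sVec_le {x : Ω₁ × Ω₁ × Ω₂} {c : ℝ} (hc : 0 ≤ c)
    (h₁ : dist (fun j => f j x.1) (fun j => g j x.1) ≤ c)
    (h₂ : dist (fun j => f j x.2.1) (fun j => g j x.2.1) ≤ c) :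
    dist (sVec k f W x) (sVec k g W x) ≤ (2 * k + 1 : ℕ) * c := by
  refine (EuclideanSpace.dist_le_mul_of_forall_dist_apply_le hc fun i => ?_).trans_eq
    (by rw [Fintype.card_fin])
  simp only [sVec, WithLp.equiv_symm_apply]
  split_ifs
  · exact (dist_le_pi_dist (fun j => f j x.1) (fun j => g j x.1) _).trans h₁
  · exact (dist_le_pi_dist (fun j => f j x.2.1) (fun j => g j x.2.1) _).trans h₂
  · simpa using hc

variable [MeasurableSpace Ω₁] [MeasurableSpace Ω₂]

lemma measurable_sVec (hf : ∀ i, Measurable (f i)) (hW : Measurable W) :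
    Measurable (sVec k f W) := by
  refine (PiLp.continuous_toLp 2 _).measurable.comp (measurable_pi_lambda _ fun i => ?_)
  split_ifs
  · exact (hf _).comp measurable_fst
  · exact (hf _).comp (measurable_fst.comp measurable_snd)
  · exact hW

variable (P₁ : Measure Ω₁) (P₂ : Measure Ω₂) [IsProbabilityMeasure P₁] [IsProbabilityMeasure P₂]

lemma isProbabilityMeasure_Smeasure (hf : ∀ i, Measurable (f i)) (hW : Measurable W) :
    IsProbabilityMeasure (Smeasure P₁ P₂ f W) :=
  Measure.isProbabilityMeasure_map (measurable_sVec hf hW).aemeasurable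

lemma levyProkhorovEDist_Smeasure_le (hf : ∀ i, Measurable (f i)) (hg : ∀ i, Measurable (g i))
    (hW : Measurable W) {G : Set Ω₁} {c : ℝ} (hc : 0 ≤ c)
    (hclose : ∀ y ∈ G, dist (fun j => f j y) (fun j => g j y) ≤ c)
    (hG : P₁ Gᶜ ≤ ENNReal.ofReal c) :
    levyProkhorovEDist (Smeasure P₁ P₂ f W) (Smeasure P₁ P₂ g W) ≤
      ENNReal.ofReal ((2 * k + 2 : ℕ) * c) := by
  refine levyProkhorovEDist_map_le_of_measure_lt_dist _ (measurable_sVec hf hW)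
    (measurable_sVec hg hW) (by positivity) ?_
  have hbad : {x | ((2 * k + 2 : ℕ) : ℝ) * c < dist (sVec k f W x) (sVec k g W x)} ⊆
      Gᶜ ×ˢ univ ∪ univ ×ˢ (Gᶜ ×ˢ univ) := by
    rintro x hx
    by_contra hgood
    simp only [mem_union, mem_prod, mem_compl_iff, mem_univ, and_true, true_and, not_or,
      not_not] at hgood
    refine (dist_sVec_le hc (hclose _ hgood.1) (hclose _ hgood.2)).not_gt (hx.trans_le' ?_)
    gcongr
    omega
  calc (P₁.prod (P₁.prod P₂)) {x | _ < dist (sVec k f W x) (sVec k g W x)}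
      ≤ P₁ Gᶜ + P₁ Gᶜ := by
        refine (measure_mono hbad).trans ((measure_union_le _ _).trans_eq ?_)
        simp [Measure.prod_prod]
    _ ≤ ENNReal.ofReal c + ENNReal.ofReal c := add_le_add hG hG
    _ ≤ ENNReal.ofReal ((2 * k + 2 : ℕ) * c) := by
        rw [← ENNReal.ofReal_add hc hc]
        gcongr
        push_cast
        nlinarith

end ProfileVector

section FunctionPartition

variable {Ω : Type*} [MeasurableSpace Ω] {k : ℕ}

lemma IsFunctionPartition.exists_eq_single {f : Fin k → Ω → ℝ} (hf : IsFunctionPartition f)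
    (y : Ω) : ∃ i, (fun j => f j y) = Pi.single i 1 := by
  obtain ⟨i, -, hi⟩ := Finset.exists_ne_zero_of_sum_ne_zero (s := Finset.univ)
    (f := fun j => f j y) (by simp [hf.2.2 y])
  have hfi : f i y = 1 := (hf.2.1 i y).resolve_left hi
  refine ⟨i, funext fun j => ?_⟩
  rcases eq_or_ne j i with rfl | hji
  · simp [hfi]
  rcases hf.2.1 j y with hfj | hfj
  · simp [hfj, hji]
  have hpair : f i y + f j y ≤ ∑ l, f l y := by
    rw [← Finset.sum_pair (f := fun l => f l y) hji.symm]
    refine Finset.sum_le_sum_of_subset_of_nonneg (Finset.subset_univ _) fun l _ _ => ?_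
    rcases hf.2.1 l y with h | h <;> simp [h]
  linarith [hf.2.2 y]

def indicatorPartition (σ : Ω → Fin k) : Fin k → Ω → ℝ :=
  fun i y => (Pi.single (σ y) 1 : Fin k → ℝ) i

lemma isFunctionPartition_indicatorPartition {σ : Ω → Fin k} (hσ : Measurable σ) :
    IsFunctionPartition (indicatorPartition σ) := by
  refine ⟨fun i => (measurable_of_finite fun c => (Pi.single c 1 : Fin k → ℝ) i).comp hσ,
    fun i y => ?_, fun y => ?_⟩
  · rcases eq_or_ne i (σ y) with rfl | h
    · simp [indicatorPartition]
    · simp [indicatorPartition, h]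
  · simp [indicatorPartition, Finset.sum_pi_single']

end FunctionPartition

namespace PVar

variable (V U : PVar) {k : ℕ}

lemma isProbabilityMeasure_of_mem_Sk {μ : Measure (RE (2 * k + 1))} (hμ : μ ∈ V.Sk k) :
    IsProbabilityMeasure μ := by
  obtain ⟨f, hf, -, rfl⟩ := hμ
  exact isProbabilityMeasure_Smeasure _ _ hf V.meas

lemma Sk'_subset_Sk : V.Sk' k ⊆ V.Sk k := by
  rintro μ ⟨f, hf, rfl⟩
  exact ⟨f, hf.1, fun i y => by rcases hf.2.1 i y with h | h <;> simp [h], rfl⟩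

lemma Sk_nonempty : (V.Sk k).Nonempty :=
  ⟨_, 0, fun _ => measurable_const, fun _ _ => by simp, rfl⟩

lemma Sk'_nonempty (hk : 0 < k) : (V.Sk' k).Nonempty :=
  ⟨_, _, isFunctionPartition_indicatorPartition (measurable_const (a := (⟨0, hk⟩ : Fin k))), rfl⟩

lemma eHausLP_Sk_le_one : eHausLP (V.Sk k) (U.Sk k) ≤ 1 :=
  eHausLP_le_one (fun _ => V.isProbabilityMeasure_of_mem_Sk)
    (fun _ => U.isProbabilityMeasure_of_mem_Sk) V.Sk_nonempty U.Sk_nonempty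

lemma eHausLP_Sk'_ne_top (hk : 0 < k) : eHausLP (V.Sk' k) (U.Sk' k) ≠ ⊤ :=
  eHausLP_le_one (fun _ hμ => V.isProbabilityMeasure_of_mem_Sk (V.Sk'_subset_Sk hμ))
    (fun _ hν => U.isProbabilityMeasure_of_mem_Sk (U.Sk'_subset_Sk hν))
    (V.Sk'_nonempty hk) (U.Sk'_nonempty hk) |>.trans_lt ENNReal.one_lt_top |>.ne

lemma eHausLP_Sk_ne_top : eHausLP (V.Sk k) (U.Sk k) ≠ ⊤ :=
  (V.eHausLP_Sk_le_one U).trans_lt ENNReal.one_lt_top |>.ne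

lemma dHLP_Sk_le_one : dHLP (V.Sk k) (U.Sk k) ≤ 1 :=
  ENNReal.toReal_le_of_le_ofReal zero_le_one (by simpa using V.eHausLP_Sk_le_one U)

end PVar

section Rounding

variable {k : ℕ}

def evenCoords (k : ℕ) (v : RE (2 * k + 1)) : Fin k → ℝ := fun j => v ⟨2 * j, by omega⟩

lemma evenCoords_sVec {Ω₁ Ω₂ : Type*} {f : Fin k → Ω₁ → ℝ} {W : Ω₁ × Ω₁ × Ω₂ → ℝ}
    (x : Ω₁ × Ω₁ × Ω₂) : evenCoords k (sVec k f W x) = fun j => f j x.1 :=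
  funext (sVec_apply_two_mul x)

def unitVectors (k : ℕ) : Set (Fin k → ℝ) := range fun i => Pi.single i 1

lemma lipschitzWith_evenCoords : LipschitzWith 1 (evenCoords k) :=
  LipschitzWith.of_dist_le_mul fun v w => by
    rw [NNReal.coe_one, one_mul]
    exact (dist_pi_le_iff dist_nonneg).2 fun (j : Fin k) =>
      PiLp.dist_apply_le v w ⟨2 * j, by omega⟩

lemma measurableSet_evenCoords_preimage_unitVectors :
    MeasurableSet (evenCoords k ⁻¹' unitVectors k) :=
  lipschitzWith_evenCoords.continuous.measurable (finite_range _).measurableSet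

def roundIdx (hk : 0 < k) (v : Fin k → ℝ) : Fin k :=
  if h : ∃ i, 1 / 2 < v i then Fin.find _ h else ⟨0, hk⟩

lemma roundIdx_eq_of_dist_lt (hk : 0 < k) {v : Fin k → ℝ} {i : Fin k}
    (hv : dist v (Pi.single i 1) < 1 / 2) : roundIdx hk v = i := by
  have hcoord : ∀ j, |v j - (Pi.single i 1 : Fin k → ℝ) j| < 1 / 2 := fun j => by
    simpa only [Real.dist_eq] using (dist_le_pi_dist v (Pi.single i 1) j).trans_lt hv
  have hvi : 1 / 2 < v i := by
    have := abs_lt.1 (hcoord i)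
    simp only [Pi.single_eq_same] at this
    linarith
  rw [roundIdx, dif_pos ⟨i, hvi⟩, Fin.find_eq_iff]
  refine ⟨hvi, fun j hj => ?_⟩
  have := abs_lt.1 (hcoord j)
  simp only [Pi.single_eq_of_ne hj.ne, sub_zero] at this
  linarith

lemma measurable_roundIdx (hk : 0 < k) : Measurable (roundIdx hk) := by
  refine measurable_to_countable' fun i => ?_
  have hpre : roundIdx hk ⁻¹' {i} = ({v | 1 / 2 < v i} ∩ ⋂ j ∈ Iio i, {v | v j ≤ 1 / 2}) ∪
      ({_v | i = ⟨0, hk⟩} ∩ ⋂ j, {v | v j ≤ 1 / 2}) := by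
    ext v
    simp only [mem_preimage, mem_singleton_iff, roundIdx, mem_union, mem_inter_iff, mem_iInter,
      mem_Iio, mem_ofPred_eq]
    split_ifs with h
    · rw [Fin.find_eq_iff]
      grind
    · grind
  have hle : ∀ j, MeasurableSet {v : Fin k → ℝ | v j ≤ 1 / 2} := fun j =>
    measurableSet_le (measurable_pi_apply j) measurable_const
  rw [hpre]
  exact .union (.inter (measurableSet_lt measurable_const (measurable_pi_apply i))
    (.biInter (to_countable _) fun j _ => hle j)) (.inter (.const _) (.iInter hle))

lemma dist_single_roundIdx_lt (hk : 0 < k) {d : ℝ} (hd : d ≤ 1 / 2) {v : Fin k → ℝ}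
    (hv : v ∈ thickening d (unitVectors k)) : dist v (Pi.single (roundIdx hk v) 1) < d := by
  obtain ⟨_, ⟨i, rfl⟩, hvi⟩ := mem_thickening_iff.1 hv
  rwa [roundIdx_eq_of_dist_lt hk (hvi.trans_le hd)]

variable {Ω₁ Ω₂ Ω₁' Ω₂' : Type*} [MeasurableSpace Ω₁] [MeasurableSpace Ω₂] [MeasurableSpace Ω₁']
  [MeasurableSpace Ω₂'] {P₁ : Measure Ω₁} {P₂ : Measure Ω₂} {Q₁ : Measure Ω₁'} {Q₂ : Measure Ω₂'}
  [IsProbabilityMeasure P₁] [IsProbabilityMeasure P₂] [IsProbabilityMeasure Q₁]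
  [IsProbabilityMeasure Q₂] {f : Fin k → Ω₁ → ℝ} {g : Fin k → Ω₁' → ℝ}
  {W : Ω₁ × Ω₁ × Ω₂ → ℝ} {W' : Ω₁' × Ω₁' × Ω₂' → ℝ}

lemma Smeasure_evenCoords_preimage_unitVectors (hf : IsFunctionPartition f) (hW : Measurable W) :
    Smeasure P₁ P₂ f W (evenCoords k ⁻¹' unitVectors k) = 1 := by
  rw [Smeasure, Measure.map_apply (measurable_sVec hf.1 hW)
    measurableSet_evenCoords_preimage_unitVectors, ← measure_univ (μ := P₁.prod (P₁.prod P₂))]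
  congr
  refine eq_univ_of_forall fun x => ?_
  obtain ⟨i, hi⟩ := hf.exists_eq_single x.1
  exact ⟨i, by rw [evenCoords_sVec, hi]⟩

lemma measure_not_mem_thickening_unitVectors_le (hf : IsFunctionPartition f) (hW : Measurable W)
    (hg : ∀ i, Measurable (g i)) (hW' : Measurable W') {d : ℝ}
    (hfg : levyProkhorovEDist (Smeasure P₁ P₂ f W) (Smeasure Q₁ Q₂ g W') < ENNReal.ofReal d) :
    Q₁ {y | (fun j => g j y) ∈ thickening d (unitVectors k)}ᶜ ≤ ENNReal.ofReal d := by
  have hd : 0 ≤ d := (ENNReal.ofReal_pos.1 (zero_le.trans_lt hfg)).le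
  have hmass := left_measure_le_of_levyProkhorovEDist_lt hfg
    measurableSet_evenCoords_preimage_unitVectors
  rw [Smeasure_evenCoords_preimage_unitVectors hf hW, ENNReal.toReal_ofReal hd] at hmass
  have hsub : thickening d (evenCoords k ⁻¹' unitVectors k) ⊆
      evenCoords k ⁻¹' thickening d (unitVectors k) := by
    simpa using lipschitzWith_evenCoords.thickening_preimage_subset one_ne_zero d (unitVectors k)
  have hgood : MeasurableSet {y | (fun j => g j y) ∈ thickening d (unitVectors k)} :=
    measurable_pi_lambda _ hg isOpen_thickening.measurableSet
  have hSg : Smeasure Q₁ Q₂ g W' (evenCoords k ⁻¹' thickening d (unitVectors k)) =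
      Q₁ {y | (fun j => g j y) ∈ thickening d (unitVectors k)} := by
    rw [Smeasure, Measure.map_apply (measurable_sVec hg hW')
      (lipschitzWith_evenCoords.continuous.measurable isOpen_thickening.measurableSet)]
    have : sVec k g W' ⁻¹' (evenCoords k ⁻¹' thickening d (unitVectors k)) =
        {y | (fun j => g j y) ∈ thickening d (unitVectors k)} ×ˢ univ := by
      ext x
      simp [evenCoords_sVec]
    simp [this, Measure.prod_prod]
  rw [prob_compl_eq_one_sub hgood, tsub_le_iff_left, ← hSg]
  exact hmass.trans (by gcongr)

end Rounding

namespace PVar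

variable {k : ℕ}

lemma exists_mem_Sk'_levyProkhorovEDist_le (hk : 0 < k) {V U : PVar}
    {μ : Measure (RE (2 * k + 1))} (hμ : μ ∈ V.Sk' k) {d : ℝ}
    (hd : eHausLP (V.Sk k) (U.Sk k) < ENNReal.ofReal d) :
    ∃ ν ∈ U.Sk' k, levyProkhorovEDist μ ν ≤ ENNReal.ofReal ((2 * k + 3 : ℕ) * d) := by
  obtain ⟨f, hf, rfl⟩ := hμ
  obtain ⟨_, ⟨g, hg, -, rfl⟩, hfg⟩ :=
    exists_levyProkhorovEDist_lt_of_eHausLP_lt hd (V.Sk'_subset_Sk ⟨f, hf, rfl⟩)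
  have hd₀ : 0 < d := ENNReal.ofReal_pos.1 (zero_le.trans_lt hfg)
  have hσ : Measurable fun y => roundIdx hk fun j => g j y :=
    (measurable_roundIdx hk).comp (measurable_pi_lambda _ hg)
  have hh := isFunctionPartition_indicatorPartition hσ
  refine ⟨_, ⟨_, hh, rfl⟩, ?_⟩
  rcases lt_or_ge d (1 / 2) with hsmall | hlarge
  · have hgh := levyProkhorovEDist_Smeasure_le U.P₁ U.P₂ hg hh.1 U.meas hd₀.le
      (fun y hy => (dist_single_roundIdx_lt hk hsmall.le hy).le)
      (measure_not_mem_thickening_unitVectors_le hf V.meas hg U.meas hfg)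
    calc _ ≤ _ := levyProkhorovEDist_triangle _ (Smeasure U.P₁ U.P₂ g U.W) _
      _ ≤ ENNReal.ofReal d + ENNReal.ofReal ((2 * k + 2 : ℕ) * d) := add_le_add hfg.le hgh
      _ = ENNReal.ofReal ((2 * k + 3 : ℕ) * d) := by
        rw [← ENNReal.ofReal_add hd₀.le (by positivity)]
        push_cast
        ring_nf
  · have := isProbabilityMeasure_Smeasure V.P₁ V.P₂ hf.1 V.meas
    have := isProbabilityMeasure_Smeasure U.P₁ U.P₂ hh.1 U.meas
    refine (levyProkhorovEDist_le_one _ _).trans (ENNReal.one_le_ofReal.2 ?_)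
    push_cast
    nlinarith

lemma eHausLP_Sk'_le (hk : 0 < k) (V U : PVar) {d : ℝ}
    (hd : eHausLP (V.Sk k) (U.Sk k) < ENNReal.ofReal d) :
    eHausLP (V.Sk' k) (U.Sk' k) ≤ ENNReal.ofReal ((2 * k + 3 : ℕ) * d) :=
  eHausLP_le_of_forall_exists (fun _ hμ => exists_mem_Sk'_levyProkhorovEDist_le hk hμ hd)
    (fun _ hν => exists_mem_Sk'_levyProkhorovEDist_le hk hν (eHausLP_comm (U.Sk k) _ ▸ hd))

lemma dHLP_Sk'_le (hk : 0 < k) (V U : PVar) :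
    dHLP (V.Sk' k) (U.Sk' k) ≤ (2 * k + 3 : ℕ) * dHLP (V.Sk k) (U.Sk k) :=
  le_of_forall_gt_of_continuous (continuous_const_mul _) fun _ hd =>
    ENNReal.toReal_le_of_le_ofReal (mul_nonneg (Nat.cast_nonneg _) (dHLP_nonneg.trans hd.le)) <|
      eHausLP_Sk'_le hk V U <| (ENNReal.lt_ofReal_iff_toReal_lt (V.eHausLP_Sk_ne_top U)).2 hd

end PVar

section Grid

variable (r : ℕ) {k : ℕ}

def quantIdx (t : ℝ) : Fin (r + 2) := Fin.clamp ⌊(t + 1) * (r + 1) / 2⌋₊ (r + 1)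

def quantVal (j : Fin (r + 2)) : ℝ := -1 + 2 * j / (r + 1)

lemma quantVal_mem_Icc (j : Fin (r + 2)) : quantVal r j ∈ Icc (-1 : ℝ) 1 := by
  have hj : (j : ℝ) ≤ r + 1 := by exact_mod_cast Nat.lt_succ_iff.1 j.isLt
  constructor
  · have : 0 ≤ 2 * (j : ℝ) / (r + 1) := by positivity
    simp only [quantVal]; linarith
  · have : 2 * (j : ℝ) / (r + 1) ≤ 2 := by rw [div_le_iff₀ (by positivity)]; linarith
    simp only [quantVal]; linarith

lemma dist_quantVal_quantIdx_le {t : ℝ} (ht : t ∈ Icc (-1 : ℝ) 1) :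
    dist t (quantVal r (quantIdx r t)) ≤ 2 / (r + 1) := by
  set y := (t + 1) * (r + 1) / 2 with hy
  have hy₀ : 0 ≤ y := by
    have : 0 ≤ t + 1 := by linarith [ht.1]
    positivity
  have hyr : ⌊y⌋₊ ≤ r + 1 := Nat.floor_le_of_le (by push_cast; rw [hy]; nlinarith [ht.2])
  have hidx : (quantIdx r t : ℝ) = ⌊y⌋₊ := by
    rw [quantIdx, Fin.clamp, ← hy, Fin.val_mk, min_eq_left hyr]
  have hfloor := Nat.floor_le hy₀
  have hfloor' := Nat.lt_floor_add_one y
  rw [Real.dist_eq, quantVal, hidx, abs_le]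
  constructor <;> rw [← sub_nonneg] <;> field_simp <;> nlinarith

lemma measurable_quantIdx : Measurable (quantIdx r) :=
  measurable_to_countable' fun j => by
    have : quantIdx r ⁻¹' {j} =
        (fun t : ℝ => min ⌊(t + 1) * (r + 1) / 2⌋₊ (r + 1)) ⁻¹' {(j : ℕ)} := by
      ext t; simp [quantIdx, Fin.ext_iff, Fin.clamp]
    rw [this]
    exact (((measurable_id.add_const 1).mul_const _).div_const 2).nat_floor.min measurable_const
      (measurableSet_singleton _)

def gridCell (v : Fin k → ℝ) : Fin ((r + 2) ^ k) :=
  finFunctionFinEquiv fun i => quantIdx r (v i)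

def gridPoint (c : Fin ((r + 2) ^ k)) : Fin k → ℝ :=
  fun i => quantVal r (finFunctionFinEquiv.symm c i)

lemma gridPoint_mem_Icc (c : Fin ((r + 2) ^ k)) (i : Fin k) :
    gridPoint r c i ∈ Icc (-1 : ℝ) 1 :=
  quantVal_mem_Icc r _

lemma dist_gridPoint_gridCell_le {v : Fin k → ℝ} (hv : ∀ i, v i ∈ Icc (-1 : ℝ) 1) :
    dist v (gridPoint r (gridCell r v)) ≤ 2 / (r + 1) :=
  (dist_pi_le_iff (by positivity)).2 fun i => by
    simpa [gridPoint, gridCell] using dist_quantVal_quantIdx_le r (hv i)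

lemma measurable_gridCell : Measurable (gridCell r (k := k)) :=
  (measurable_of_finite _).comp (measurable_pi_lambda _ fun i => (measurable_quantIdx r).comp
    (measurable_pi_apply i))

end Grid

section Mixing

variable {k N : ℕ} (A : Fin N → Fin k → ℝ)

def mixFamily {Ω : Type*} (q : Fin N → Ω → ℝ) : Fin k → Ω → ℝ := fun i y => ∑ c, q c y * A c i

lemma mixFamily_eq_of_eq_single {Ω : Type*} {q : Fin N → Ω → ℝ} {y : Ω} {c : Fin N}
    (h : (fun j => q j y) = Pi.single c 1) : (fun i => mixFamily A q i y) = A c := by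
  have hq : ∀ j, q j y = (Pi.single c 1 : Fin N → ℝ) j := fun j => congrFun h j
  ext i
  simp [mixFamily, hq, Pi.single_apply]

lemma measurable_mixFamily {Ω : Type*} [MeasurableSpace Ω] {q : Fin N → Ω → ℝ}
    (hq : ∀ c, Measurable (q c)) (i : Fin k) : Measurable (mixFamily A q i) :=
  Finset.measurable_sum _ fun c _ => (hq c).mul_const _

def mixMap : RE (2 * N + 1) →L[ℝ] RE (2 * k + 1) :=
  LinearMap.toContinuousLinearMap
  { toFun := fun v => WithLp.toLp 2 fun i =>
      if h : (i : ℕ) < 2 * k then ∑ c : Fin N, v ⟨2 * c + i % 2, by omega⟩ * A c ⟨i / 2, by omega⟩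
      else v ⟨2 * N, by omega⟩
    map_add' := fun v w => by
      ext i
      simp only [WithLp.ofLp_add, Pi.add_apply]
      split_ifs <;> simp [add_mul, Finset.sum_add_distrib]
    map_smul' := fun a v => by
      ext i
      simp only [WithLp.ofLp_smul, Pi.smul_apply, RingHom.id_apply]
      split_ifs <;> simp [Finset.mul_sum, mul_assoc] }

lemma sVec_mixFamily {Ω₁ Ω₂ : Type*} (q : Fin N → Ω₁ → ℝ) (W : Ω₁ × Ω₁ × Ω₂ → ℝ)
    (x : Ω₁ × Ω₁ × Ω₂) : sVec k (mixFamily A q) W x = mixMap A (sVec N q W x) := by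
  ext i
  simp only [mixMap, LinearMap.coe_toContinuousLinearMap', LinearMap.coe_mk, AddHom.coe_mk,
    sVec, WithLp.equiv_symm_apply, mixFamily]
  split_ifs with hi hpar <;> try omega
  · refine Finset.sum_congr rfl fun c _ => ?_
    rw [dif_pos (by omega), if_pos (by omega)]
    congr 3
    ext; dsimp only; omega
  · refine Finset.sum_congr rfl fun c _ => ?_
    rw [dif_pos (by omega), if_neg (by omega)]
    congr 3
    ext; dsimp only; omega
  · rfl

lemma Smeasure_mixFamily {Ω₁ Ω₂ : Type*} [MeasurableSpace Ω₁] [MeasurableSpace Ω₂]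
    (P₁ : Measure Ω₁) (P₂ : Measure Ω₂) {q : Fin N → Ω₁ → ℝ} (hq : ∀ c, Measurable (q c))
    {W : Ω₁ × Ω₁ × Ω₂ → ℝ} (hW : Measurable W) :
    Smeasure P₁ P₂ (mixFamily A q) W = (Smeasure P₁ P₂ q W).map (mixMap A) := by
  rw [Smeasure, Smeasure,
    Measure.map_map (mixMap A).continuous.measurable (measurable_sVec hq hW)]
  exact congrArg (Measure.map · _) (funext fun x => sVec_mixFamily A q W x)

end Mixing

def gridLipConst (r k : ℕ) : ℝ≥0 := max 1 ‖mixMap (gridPoint r (k := k))‖₊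

namespace PVar

variable {k : ℕ}

lemma exists_mem_Sk_levyProkhorovEDist_le (r : ℕ) {V U : PVar} {μ : Measure (RE (2 * k + 1))}
    (hμ : μ ∈ V.Sk k) {ρ : ℝ}
    (hρ : eHausLP (V.Sk' ((r + 2) ^ k)) (U.Sk' ((r + 2) ^ k)) < ENNReal.ofReal ρ) :
    ∃ ν ∈ U.Sk k, levyProkhorovEDist μ ν ≤
      ENNReal.ofReal (gridLipConst r k * ρ + (2 * k + 2 : ℕ) * (2 / (r + 1))) := by
  obtain ⟨f, hf, hf_mem, rfl⟩ := hμ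
  have hσ : Measurable fun y => gridCell r fun i => f i y :=
    (measurable_gridCell r).comp (measurable_pi_lambda _ hf)
  set p := indicatorPartition fun y => gridCell r fun i => f i y
  have hp : IsFunctionPartition p := isFunctionPartition_indicatorPartition hσ
  obtain ⟨_, ⟨q, hq, rfl⟩, hpq⟩ := exists_levyProkhorovEDist_lt_of_eHausLP_lt hρ ⟨p, hp, rfl⟩
  have hρ₀ : 0 ≤ ρ := (ENNReal.ofReal_pos.1 (zero_le.trans_lt hpq)).le
  have hq_mem : ∀ i y, mixFamily (gridPoint r) q i y ∈ Icc (-1 : ℝ) 1 := fun i y => by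
    obtain ⟨c, hc⟩ := hq.exists_eq_single y
    exact congrFun (mixFamily_eq_of_eq_single (gridPoint r) hc) i ▸ gridPoint_mem_Icc r c i
  refine ⟨_, ⟨_, measurable_mixFamily _ hq.1, hq_mem, rfl⟩, ?_⟩
  have hgrid := levyProkhorovEDist_Smeasure_le V.P₁ V.P₂ hf (measurable_mixFamily _ hp.1) V.meas
    (G := univ) (c := 2 / (r + 1)) (by positivity)
    (fun y _ => by
      rw [mixFamily_eq_of_eq_single _ rfl]
      exact dist_gridPoint_gridCell_le r fun i => hf_mem i y)
    (by simp)
  have hmix : levyProkhorovEDist (Smeasure V.P₁ V.P₂ (mixFamily (gridPoint r) p) V.W)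
      (Smeasure U.P₁ U.P₂ (mixFamily (gridPoint r) q) U.W) ≤
        ENNReal.ofReal (gridLipConst r k * ρ) := by
    rw [Smeasure_mixFamily _ _ _ hp.1 V.meas, Smeasure_mixFamily _ _ _ hq.1 U.meas,
      ENNReal.ofReal_mul (NNReal.coe_nonneg _), ENNReal.ofReal_coe_nnreal]
    exact (levyProkhorovEDist_map_le_of_lipschitzWith (K := gridLipConst r k)
      ((mixMap _).lipschitz.weaken (le_max_right _ _)) (le_max_left _ _)
      (mixMap _).continuous.measurable _ _).trans (by gcongr)
  calc _ ≤ _ := levyProkhorovEDist_triangle _ _ _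
    _ ≤ _ := add_le_add hgrid hmix
    _ = _ := by rw [← ENNReal.ofReal_add (by positivity) (by positivity), add_comm]

lemma eHausLP_Sk_le (r : ℕ) (V U : PVar) {ρ : ℝ}
    (hρ : eHausLP (V.Sk' ((r + 2) ^ k)) (U.Sk' ((r + 2) ^ k)) < ENNReal.ofReal ρ) :
    eHausLP (V.Sk k) (U.Sk k) ≤
      ENNReal.ofReal (gridLipConst r k * ρ + (2 * k + 2 : ℕ) * (2 / (r + 1))) :=
  eHausLP_le_of_forall_exists (fun _ hμ => exists_mem_Sk_levyProkhorovEDist_le r hμ hρ)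
    (fun _ hν => exists_mem_Sk_levyProkhorovEDist_le r hν (eHausLP_comm (U.Sk' _) _ ▸ hρ))

lemma dHLP_Sk_le (r : ℕ) (V U : PVar) :
    dHLP (V.Sk k) (U.Sk k) ≤
      gridLipConst r k * dHLP (V.Sk' ((r + 2) ^ k)) (U.Sk' ((r + 2) ^ k)) +
        (2 * k + 2 : ℕ) * (2 / (r + 1)) :=
  le_of_forall_gt_of_continuous
    (F := fun ρ => gridLipConst r k * ρ + (2 * k + 2 : ℕ) * (2 / (r + 1))) (by fun_prop)
    fun _ hρ => ENNReal.toReal_le_of_le_ofReal (by have := dHLP_nonneg.trans hρ.le; positivity) <|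
      eHausLP_Sk_le r V U <|
        (ENNReal.lt_ofReal_iff_toReal_lt (V.eHausLP_Sk'_ne_top U (by positivity))).2 hρ

end PVar

lemma summable_dM (V U : PVar) :
    Summable fun k : ℕ => (2 : ℝ)⁻¹ ^ (k + 1) * dHLP (V.Sk (k + 1)) (U.Sk (k + 1)) :=
  summable_two_inv_pow_succ.of_nonneg_of_le (fun _ => mul_nonneg (by positivity) dHLP_nonneg)
    (fun k => mul_le_of_le_one_right (by positivity) (V.dHLP_Sk_le_one U))

lemma dM_nonneg (V U : PVar) : 0 ≤ dM V U :=
  tsum_nonneg fun _ => mul_nonneg (by positivity) dHLP_nonneg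

lemma dHLP_Sk_le_dM (V U : PVar) (k : ℕ) :
    dHLP (V.Sk (k + 1)) (U.Sk (k + 1)) ≤ 2 ^ (k + 1) * dM V U := by
  have hterm := (summable_dM V U).le_tsum k fun _ _ => mul_nonneg (by positivity) dHLP_nonneg
  calc dHLP (V.Sk (k + 1)) (U.Sk (k + 1))
      = 2 ^ (k + 1) * ((2 : ℝ)⁻¹ ^ (k + 1) * dHLP (V.Sk (k + 1)) (U.Sk (k + 1))) := by
        rw [← mul_assoc, ← mul_pow]; norm_num
    _ ≤ 2 ^ (k + 1) * dM V U := by gcongr; exact hterm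

lemma cauchy_iff_tendsto_atTop (u : ℕ → ℕ → ℝ) (hu : ∀ m n, 0 ≤ u m n) :
    (∀ ε > 0, ∃ N : ℕ, ∀ m ≥ N, ∀ n ≥ N, u m n < ε) ↔
      Tendsto (fun p : ℕ × ℕ => u p.1 p.2) atTop (𝓝 0) := by
  rw [← prod_atTop_atTop_eq, (atTop_basis.prod_self).tendsto_iff Metric.nhds_basis_ball]
  simp only [mem_Ici, mem_ball, Real.dist_eq, sub_zero, abs_of_nonneg (hu _ _), mem_prod,
    true_and, and_imp, Prod.forall]
  exact forall₂_congr fun ε _ => exists_congr fun N =>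
    ⟨fun h m n hm hn => h m hm n hn, fun h m hm n hn => h m n hm hn⟩

section Convergence

variable {ι : Type*} {l : Filter ι} {V U : ι → PVar}

lemma tendsto_dM_iff : Tendsto (fun i => dM (V i) (U i)) l (𝓝 0) ↔
    ∀ k, 0 < k → Tendsto (fun i => dHLP ((V i).Sk k) ((U i).Sk k)) l (𝓝 0) := by
  refine ⟨fun h k hk => ?_, fun h => ?_⟩
  · obtain ⟨k, rfl⟩ := Nat.exists_eq_succ_of_ne_zero hk.ne'
    exact squeeze_zero (fun _ => dHLP_nonneg) (fun i => dHLP_Sk_le_dM (V i) (U i) k)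
      (by simpa using h.const_mul (2 ^ (k + 1)))
  · have hsum := tendsto_tsum_of_dominated_convergence (g := fun _ => (0 : ℝ))
      (f := fun i k => (2 : ℝ)⁻¹ ^ (k + 1) * dHLP ((V i).Sk (k + 1)) ((U i).Sk (k + 1)))
      (bound := fun k => (2 : ℝ)⁻¹ ^ (k + 1)) summable_two_inv_pow_succ
      (fun k => by simpa using (h (k + 1) k.succ_pos).const_mul ((2 : ℝ)⁻¹ ^ (k + 1)))
      (.of_forall fun i k => by
        rw [Real.norm_of_nonneg (mul_nonneg (by positivity) dHLP_nonneg)]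
        exact mul_le_of_le_one_right (by positivity) ((V i).dHLP_Sk_le_one (U i)))
    rwa [tsum_zero] at hsum

lemma tendsto_dHLP_Sk'_of_tendsto_dHLP_Sk {k : ℕ} (hk : 0 < k)
    (h : Tendsto (fun i => dHLP ((V i).Sk k) ((U i).Sk k)) l (𝓝 0)) :
    Tendsto (fun i => dHLP ((V i).Sk' k) ((U i).Sk' k)) l (𝓝 0) :=
  squeeze_zero (fun _ => dHLP_nonneg) (fun i => PVar.dHLP_Sk'_le hk (V i) (U i))
    (by simpa using h.const_mul _)

lemma tendsto_dHLP_Sk_of_forall_tendsto_dHLP_Sk'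
    (h : ∀ N, 0 < N → Tendsto (fun i => dHLP ((V i).Sk' N) ((U i).Sk' N)) l (𝓝 0)) (k : ℕ) :
    Tendsto (fun i => dHLP ((V i).Sk k) ((U i).Sk k)) l (𝓝 0) := by
  refine tendsto_order.2 ⟨fun a ha => .of_forall fun i => ha.trans_le dHLP_nonneg, fun ε hε => ?_⟩
  have hmesh :
      Tendsto (fun r : ℕ => ((2 * k + 2 : ℕ) : ℝ) * (2 / ((r : ℝ) + 1))) atTop (𝓝 0) := by
    simpa [div_eq_mul_inv] using (tendsto_one_div_add_atTop_nhds_zero_nat.const_mul 2).const_mul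
      ((2 * k + 2 : ℕ) : ℝ)
  obtain ⟨r, hr⟩ := (hmesh.eventually (gt_mem_nhds (half_pos hε))).exists
  have hgrid := (h ((r + 2) ^ k) (by positivity)).const_mul (gridLipConst r k : ℝ)
  rw [mul_zero] at hgrid
  filter_upwards [hgrid.eventually (gt_mem_nhds (half_pos hε))] with i hi
  calc dHLP ((V i).Sk k) ((U i).Sk k) ≤ _ := PVar.dHLP_Sk_le r (V i) (U i)
    _ < ε / 2 + ε / 2 := add_lt_add hi hr
    _ = ε := add_halves ε

end Convergence

universe u₁ u₂

/-- A sequence `(W_n)` of P-variables (each on its own pair of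
probability spaces) is Cauchy in the P-variables metric `d_M` if and only if for every
integer `k ≥ 1` the sequence of restricted profiles `(S'_k(W_n))` is Cauchy in the
Hausdorff (pseudo)metric `d_H`. -/
theorem dM_cauchy_iff_Sk'_cauchy (V : ℕ → PVar.{u₁, u₂}) :
    (∀ ε > (0 : ℝ), ∃ N : ℕ, ∀ m ≥ N, ∀ n ≥ N, dM (V m) (V n) < ε) ↔
    (∀ k : ℕ, 1 ≤ k →
      ∀ ε > (0 : ℝ), ∃ N : ℕ, ∀ m ≥ N, ∀ n ≥ N,
        dHLP ((V m).Sk' k) ((V n).Sk' k) < ε) := by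
  simp only [cauchy_iff_tendsto_atTop _ fun _ _ => dHLP_nonneg]
  rw [cauchy_iff_tendsto_atTop _ fun m n => dM_nonneg (V m) (V n), tendsto_dM_iff]
  exact ⟨fun h k hk => tendsto_dHLP_Sk'_of_tendsto_dHLP_Sk hk (h k hk),
    fun h k _ => tendsto_dHLP_Sk_of_forall_tendsto_dHLP_Sk' h k⟩
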